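/- arXiv:2509.17491 — 3 statements merged into one kernel-verified Lean document; each statement's English description precedes it below -/
import Mathlib

section
/- Let F : ℝⁿ → ℝ be a differentiable function that is symmetric in coordinates i and j, meaning F(σ(y)) = F(y) for all y ∈ ℝⁿ, where σ : ℝⁿ → ℝⁿ swaps the i-th and j-th coordinates and fixes all others. Let x, x' ∈ ℝⁿ satisfy x_i = x_j and x'_i = x'_j. Then for every weight function g : ℝ → ℝ, the Path-Weighted Integrated Gradients attributions to coordinates i and j coincide: PWIG_i(F, x, x', g) = PWIG_j(F, x, x', g). -/
open MeasureTheory intervalIntegral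

/-- Path-Weighted Integrated Gradients attribution for the `k`-th coordinate. -/
noncomputable def pwig (n : ℕ) (F : (Fin n → ℝ) → ℝ) (x x' : Fin n → ℝ)
    (g : ℝ → ℝ) (k : Fin n) : ℝ :=
  (x k - x' k) * ∫ α in (0:ℝ)..1, g α * fderiv ℝ F (x' + α • (x - x')) (Pi.single k 1)

/-- The map swapping the `i`-th and `j`-th coordinates of a vector. -/
def coordSwap (n : ℕ) (i j : Fin n) (y : Fin n → ℝ) : Fin n → ℝ :=
  y ∘ Equiv.swap i j

/-- `coordSwap` as a continuous linear map. -/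
noncomputable def swapCLM (n : ℕ) (i j : Fin n) : (Fin n → ℝ) →L[ℝ] (Fin n → ℝ) :=
  ContinuousLinearMap.pi fun k => ContinuousLinearMap.proj (Equiv.swap i j k)

lemma swapCLM_apply (n : ℕ) (i j : Fin n) (y : Fin n → ℝ) :
    swapCLM n i j y = coordSwap n i j y := rfl

theorem pwig_symmetry (n : ℕ) (F : (Fin n → ℝ) → ℝ) (hF : Differentiable ℝ F)
    (i j : Fin n) (hsym : ∀ y, F (coordSwap n i j y) = F y)
    (x x' : Fin n → ℝ) (hx : x i = x j) (hx' : x' i = x' j)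
    (g : ℝ → ℝ) :
    pwig n F x x' g i = pwig n F x x' g j := by
  set L := swapCLM n i j with hL
  have hFL : F ∘ L = F := by
    funext y; exact hsym y
  have hderiv : ∀ p : Fin n → ℝ, L p = p →
      ∀ v, fderiv ℝ F p v = fderiv ℝ F p (L v) := by
    intro p hp v
    have h1 : fderiv ℝ (F ∘ L) p = (fderiv ℝ F (L p)).comp L :=
      (hF (L p)).hasFDerivAt.comp p (L.hasFDerivAt) |>.fderiv
    have h2 : fderiv ℝ (F ∘ L) p = fderiv ℝ F p := by rw [hFL]
    conv_lhs => rw [← h2, h1]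
    rw [hp]
    rfl
  have hLsingle : L (Pi.single i 1) = Pi.single j 1 := by
    funext k
    rw [swapCLM_apply]
    simp only [coordSwap, Function.comp_apply, Pi.single_apply, Equiv.swap_apply_def]
    split_ifs <;> simp_all
  have hpath : ∀ α : ℝ, L (x' + α • (x - x')) = x' + α • (x - x') := by
    intro α
    funext k
    rw [swapCLM_apply]
    show (x' + α • (x - x')) (Equiv.swap i j k) = (x' + α • (x - x')) k
    by_cases hk : k = i
    · subst hk; simp [Equiv.swap_apply_left, hx, hx']
    · by_cases hk' : k = j
      · subst hk'; simp [Equiv.swap_apply_right, hx, hx']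
      · rw [Equiv.swap_apply_of_ne_of_ne hk hk']
  unfold pwig
  rw [hx, hx']
  congr 1
  apply intervalIntegral.integral_congr
  intro α _
  dsimp only
  congr 1
  rw [hderiv _ (hpath α) (Pi.single i 1), hLsingle]
end

section
/- Let F : ℝⁿ → ℝ be continuously differentiable and let the weight function be the constant function g(α) = 1. Then for every input x ∈ ℝⁿ and baseline x' ∈ ℝⁿ, the Path-Weighted Integrated Gradients attributions satisfy the Completeness property: the sum over all coordinates k of PWIG_k(F, x, x', g) equals F(x) − F(x'). -/
open MeasureTheory intervalIntegral

/-! With `g ≡ 1`, the sum of the attributions is the integral of the directional derivative of `F`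
along the straight path from `x'` to `x`, which is `F x - F x'` by the fundamental theorem of
calculus applied to `α ↦ F (x' + α • (x - x'))`. -/

theorem LinearMap.sum_smul_apply_single {R M ι : Type*} [CommSemiring R] [AddCommMonoid M]
    [Module R M] [Fintype ι] [DecidableEq ι] (f : (ι → R) →ₗ[R] M) (v : ι → R) :
    ∑ i, v i • f (Pi.single i 1) = f v := by
  conv_rhs => rw [← Finset.univ_sum_single v, map_sum]
  refine Finset.sum_congr rfl fun i _ => ?_
  rw [← map_smul, ← Pi.single_smul', smul_eq_mul, mul_one]

theorem integral_fderiv_segment {E G : Type*} [NormedAddCommGroup E] [NormedSpace ℝ E]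
    [NormedAddCommGroup G] [NormedSpace ℝ G] [CompleteSpace G] {f : E → G}
    (hf : ContDiff ℝ 1 f) (x y : E) :
    ∫ t in (0:ℝ)..1, fderiv ℝ f (y + t • (x - y)) (x - y) = f x - f y := by
  have hpath : ∀ t : ℝ, HasDerivAt (fun t : ℝ => y + t • (x - y)) (x - y) t := fun t => by
    simpa using ((hasDerivAt_id t).smul_const (x - y)).const_add y
  have hderiv_cont : Continuous fun t : ℝ => fderiv ℝ f (y + t • (x - y)) (x - y) := by
    fun_prop (disch := exact hf.continuous_fderiv one_ne_zero)
  have hftc := integral_eq_sub_of_hasDerivAt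
    (f := fun t : ℝ => f (y + t • (x - y)))
    (fun t _ => ((hf.differentiable one_ne_zero _).hasFDerivAt.comp_hasDerivAt t (hpath t)))
    (hderiv_cont.intervalIntegrable 0 1)
  simpa using hftc

theorem sum_pwig_eq_integral {n : ℕ} {F : (Fin n → ℝ) → ℝ} (hF : ContDiff ℝ 1 F) {g : ℝ → ℝ}
    (hg : IntervalIntegrable g volume 0 1) (x x' : Fin n → ℝ) :
    ∑ k, pwig n F x x' g k =
      ∫ α in (0:ℝ)..1, g α * fderiv ℝ F (x' + α • (x - x')) (x - x') := by
  have hintegrable : ∀ v : Fin n → ℝ,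
      IntervalIntegrable (fun α => g α * fderiv ℝ F (x' + α • (x - x')) v) volume 0 1 :=
    fun v => hg.mul_continuousOn <| Continuous.continuousOn <| by
      fun_prop (disch := exact hF.continuous_fderiv one_ne_zero)
  simp_rw [pwig, ← intervalIntegral.integral_const_mul,
    ← intervalIntegral.integral_finsetSum fun k _ => (hintegrable _).const_mul _]
  refine integral_congr fun α _ => ?_
  simp only [mul_left_comm _ (g α), ← Finset.mul_sum]
  exact congrArg _ ((fderiv ℝ F _ : _ →ₗ[ℝ] ℝ).sum_smul_apply_single (x - x'))

theorem pwig_completeness (n : ℕ) (F : (Fin n → ℝ) → ℝ) (hF : ContDiff ℝ 1 F)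
    (x x' : Fin n → ℝ) :
    ∑ k : Fin n, pwig n F x x' (fun _ => 1) k = F x - F x' := by
  rw [sum_pwig_eq_integral hF intervalIntegrable_const]
  simp only [one_mul]
  exact integral_fderiv_segment hF x x'
end

section
/- Let F : ℝⁿ → ℝ be an affine function, F(y) = c₀ + Σ_m c_m · y_m for constants c₀, c₁, …, c_n ∈ ℝ, and let g : ℝ → ℝ be interval-integrable on [0,1]. Then for every input x ∈ ℝⁿ and baseline x' ∈ ℝⁿ, the sum over all coordinates k of PWIG_k(F, x, x', g) equals (∫₀¹ g(α) dα) · (F(x) − F(x')). In particular, for such F the Completeness property (sum of attributions equals F(x) − F(x')) can fail when the weight function is not suitably normalized, and holds for all affine F whenever ∫₀¹ g(α) dα = 1. -/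
open MeasureTheory intervalIntegral

theorem pwig_affine_completeness (n : ℕ) (c₀ : ℝ) (c : Fin n → ℝ)
    (F : (Fin n → ℝ) → ℝ) (hF : F = fun y => c₀ + ∑ m : Fin n, c m * y m)
    (g : ℝ → ℝ) (hg : IntervalIntegrable g MeasureTheory.volume 0 1)
    (x x' : Fin n → ℝ) :
    ∑ k : Fin n, pwig n F x x' g k
      = (∫ α in (0:ℝ)..1, g α) * (F x - F x') := by
  set L : (Fin n → ℝ) →L[ℝ] ℝ :=
    ∑ m : Fin n, c m • (ContinuousLinearMap.proj m : (Fin n → ℝ) →L[ℝ] ℝ) with hLdef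
  have hLapp : ∀ y : Fin n → ℝ, L y = ∑ m : Fin n, c m * y m := by
    intro y
    simp [hLdef, ContinuousLinearMap.sum_apply]
  have hderiv : ∀ y : Fin n → ℝ, HasFDerivAt F L y := by
    intro y
    rw [hF]
    have : HasFDerivAt (fun z : Fin n → ℝ => c₀ + L z) L y :=
      (L.hasFDerivAt).const_add c₀
    convert this using 2 with z
    rw [hLapp]
  have hfd : ∀ y : Fin n → ℝ, fderiv ℝ F y = L := fun y => (hderiv y).fderiv
  have hLsingle : ∀ k : Fin n, L (Pi.single k 1) = c k := by
    intro k
    rw [hLapp]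
    rw [Finset.sum_eq_single k]
    · simp
    · intro b _ hb; simp [Pi.single_apply, hb]
    · simp
  have hpw : ∀ k : Fin n, pwig n F x x' g k
      = (x k - x' k) * (c k * ∫ α in (0:ℝ)..1, g α) := by
    intro k
    unfold pwig
    congr 1
    simp only [hfd, hLsingle]
    rw [intervalIntegral.integral_mul_const]
    ring
  simp only [hpw]
  have hFsub : F x - F x' = ∑ m : Fin n, c m * (x m - x' m) := by
    simp [hF, mul_sub, Finset.sum_sub_distrib]
  rw [hFsub, Finset.mul_sum]
  apply Finset.sum_congr rfl
  intro k _
  ring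
end
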